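/- Theorem 1, encoder part (part-equivariance of the frame-averaged encoder): let W ∈ {0,1}^{n×k} with each row summing to 1, with columns w_j, and let φ : ℝ^{n×3} → ℝ^m × ℝ^{d×3} be an arbitrary function. For X ∈ ℝ^{n×3} define for each part j the part geometry X_j = (𝟏 − w_j) t_j(X)ᵀ + w_j ⊙ X, where t_j(X) is the w_j-weighted centroid of X, and the latent code Z_j = (1/|F_j(X)|) Σ_{g ∈ F_j(X)} ρ_Z(g) φ(ρ_X(g)⁻¹ X_j), where F_j is the w_j-weighted PCA frame (assume for each j the w_j-weighted covariance of X has three distinct eigenvalues). Then for any g₁,…,g_k ∈ E(3), the transformed input X' = Σ_{l=1}^k w_l ⊙ (ρ_X(g_l)X) has latent codes Z'_j = ρ_Z(g_j) Z_j for every j ∈ {1,…,k}. -/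

import Mathlib

open Matrix

noncomputable section

/-- The all-ones vector in `ℝⁿ`. -/
def onesVec (n : ℕ) : Fin n → ℝ := fun _ => 1

/-- Action of `g = (R, t) ∈ E(3)` on `V ∈ ℝ^{n×3}`: `ρ(g)V = V Rᵀ + 𝟏 tᵀ`. -/
def euclAct {n : ℕ} (R : Matrix (Fin 3) (Fin 3) ℝ) (t : Fin 3 → ℝ)
    (V : Matrix (Fin n) (Fin 3) ℝ) : Matrix (Fin n) (Fin 3) ℝ :=
  V * Rᵀ + Matrix.vecMulVec (onesVec n) t

/-- Inverse action: `ρ(g)⁻¹ V = (V - 𝟏 tᵀ) R`. -/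
def euclActInv {n : ℕ} (R : Matrix (Fin 3) (Fin 3) ℝ) (t : Fin 3 → ℝ)
    (V : Matrix (Fin n) (Fin 3) ℝ) : Matrix (Fin n) (Fin 3) ℝ :=
  (V - Matrix.vecMulVec (onesVec n) t) * R

/-- The weighted centroid `t(V) = (1/(𝟏ᵀw)) Vᵀ w`. -/
def centroid {n : ℕ} (w : Fin n → ℝ) (V : Matrix (Fin n) (Fin 3) ℝ) : Fin 3 → ℝ :=
  (∑ i, w i)⁻¹ • (Vᵀ.mulVec w)

/-- The weighted covariance `C(V) = (V − 𝟏 t(V)ᵀ)ᵀ diag(w) (V − 𝟏 t(V)ᵀ)`. -/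
def wcov {n : ℕ} (w : Fin n → ℝ) (V : Matrix (Fin n) (Fin 3) ℝ) :
    Matrix (Fin 3) (Fin 3) ℝ :=
  (V - Matrix.vecMulVec (onesVec n) (centroid w V))ᵀ * Matrix.diagonal w *
    (V - Matrix.vecMulVec (onesVec n) (centroid w V))

/-- `μ` is an eigenvalue of `M`. -/
def IsEigenvalue (M : Matrix (Fin 3) (Fin 3) ℝ) (μ : ℝ) : Prop :=
  ∃ v : Fin 3 → ℝ, v ≠ 0 ∧ M.mulVec v = μ • v

/-- The weighted PCA frame: pairs `(R, t(V))` where the `i`-th column of `R` is a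
unit-norm eigenvector of the weighted covariance `C(V)` for the eigenvalue `lam i`. -/
def pcaFrame {n : ℕ} (lam : Fin 3 → ℝ) (w : Fin n → ℝ) (V : Matrix (Fin n) (Fin 3) ℝ) :
    Set (Matrix (Fin 3) (Fin 3) ℝ × (Fin 3 → ℝ)) :=
  { p | p.2 = centroid w V ∧ ∀ i : Fin 3,
      (fun j => p.1 j i) ⬝ᵥ (fun j => p.1 j i) = 1 ∧
      (wcov w V).mulVec (fun j => p.1 j i) = lam i • (fun j => p.1 j i) }

/-- Row-wise scaling `(a ⊙ B)_{ij} = a_i B_{ij}`. -/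
def rowScale {n : ℕ} (a : Fin n → ℝ) (B : Matrix (Fin n) (Fin 3) ℝ) :
    Matrix (Fin n) (Fin 3) ℝ :=
  Matrix.of fun i j => a i * B i j


/-- The part geometry `X_j = (𝟏 − w_j) t_j(X)ᵀ + w_j ⊙ X`, where `w_j` is the `j`-th
column of the partitioning matrix `W` and `t_j(X)` is the `w_j`-weighted centroid. -/
def partGeom {n k : ℕ} (W : Matrix (Fin n) (Fin k) ℝ) (j : Fin k)
    (X : Matrix (Fin n) (Fin 3) ℝ) : Matrix (Fin n) (Fin 3) ℝ :=
  Matrix.vecMulVec (fun i => 1 - W i j) (centroid (fun i => W i j) X) +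
    rowScale (fun i => W i j) X

/-- Action of `g = (R,t) ∈ E(3)` on a latent code `(u,U)`: `ρ_Z(g)(u,U) = (u, U Rᵀ + 𝟏 tᵀ)`. -/
def rhoZ {m d : ℕ} (R : Matrix (Fin 3) (Fin 3) ℝ) (t : Fin 3 → ℝ)
    (Z : (Fin m → ℝ) × Matrix (Fin d) (Fin 3) ℝ) :
    (Fin m → ℝ) × Matrix (Fin d) (Fin 3) ℝ :=
  (Z.1, euclAct R t Z.2)

/-- The `j`-th latent code of the frame-averaged encoder:
`Z_j = (1/|F_j(X)|) Σ_{g ∈ F_j(X)} ρ_Z(g) φ(ρ_X(g)⁻¹ X_j)`. -/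
def encCode {n k m d : ℕ} (W : Matrix (Fin n) (Fin k) ℝ) (lam : Fin k → Fin 3 → ℝ)
    (φ : Matrix (Fin n) (Fin 3) ℝ → (Fin m → ℝ) × Matrix (Fin d) (Fin 3) ℝ)
    (X : Matrix (Fin n) (Fin 3) ℝ) (j : Fin k) :
    (Fin m → ℝ) × Matrix (Fin d) (Fin 3) ℝ :=
  (Nat.card (pcaFrame (lam j) (fun i => W i j) X) : ℝ)⁻¹ •
    ∑ᶠ p ∈ pcaFrame (lam j) (fun i => W i j) X,
      rhoZ p.1 p.2 (φ (euclActInv p.1 p.2 (partGeom W j X)))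

/-!
For a hard partition, `w_j ⊙ X' = w_j ⊙ ρ(g_j) X`, and the centroid, covariance, PCA frame and
part geometry of part `j` see `X` only through `w_j ⊙ X`; so it suffices to move the whole
input by one rigid motion `g = (R, τ)`. Then the centroid becomes `g · t`, the covariance is
conjugated by `R`, the PCA frame is left-translated, `F(ρ(g) X) = g F(X)`, and the part geometry
is moved by `ρ(g)`. Reindexing the frame average along `h ↦ g h` turns each summand
`ρ_Z(g h) φ(ρ(g h)⁻¹ ρ(g) X_j)` into `ρ_Z(g) ρ_Z(h) φ(ρ(h)⁻¹ X_j)`, and the affine map `ρ_Z(g)`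
commutes with averaging. The average is over a finite nonempty set because the eigenvalues are
distinct: every eigenspace is a line, so each column of a frame is a fixed unit vector up to sign.
-/

lemma vecMulVec_mulVec_eq_mul_transpose {α l m p : Type*} [CommSemiring α] [Fintype m]
    (u : l → α) (R : Matrix p m α) (v : m → α) :
    vecMulVec u (R *ᵥ v) = vecMulVec u v * Rᵀ := by
  rw [vecMulVec_mul, vecMul_transpose]

lemma col_mul_eq_mulVec {α l m p : Type*} [CommSemiring α] [Fintype m] (R : Matrix l m α)
    (P : Matrix m p α) (i : p) :
    (fun a => (R * P) a i) = R *ᵥ fun a => P a i := by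
  ext a
  simp [mul_apply, mulVec, dotProduct]

section Weighted

variable {n : ℕ} (w : Fin n → ℝ)

lemma rowScale_eq_diagonal_mul (B : Matrix (Fin n) (Fin 3) ℝ) :
    rowScale w B = diagonal w * B := by
  ext i j
  simp [rowScale, diagonal_mul]

lemma diagonal_mulVec_onesVec : diagonal w *ᵥ onesVec n = w := by
  ext i
  simp [mulVec_diagonal, onesVec]

lemma centroid_congr {V V' : Matrix (Fin n) (Fin 3) ℝ} (h : rowScale w V = rowScale w V') :
    centroid w V = centroid w V' := by
  have key : ∀ V : Matrix (Fin n) (Fin 3) ℝ, Vᵀ *ᵥ w = (rowScale w V)ᵀ *ᵥ onesVec n := by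
    intro V
    rw [rowScale_eq_diagonal_mul, transpose_mul, diagonal_transpose, ← mulVec_mulVec,
      diagonal_mulVec_onesVec]
  simp only [centroid, key V, key V', h]

lemma wcov_congr {V V' : Matrix (Fin n) (Fin 3) ℝ} (h : rowScale w V = rowScale w V') :
    wcov w V = wcov w V' := by
  simp only [wcov, centroid_congr w h]
  set A := V - vecMulVec (onesVec n) (centroid w V')
  set A' := V' - vecMulVec (onesVec n) (centroid w V')
  have hA : diagonal w * A = diagonal w * A' := by
    simp only [A, A', Matrix.mul_sub, ← rowScale_eq_diagonal_mul, h]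
  calc Aᵀ * diagonal w * A = (diagonal w * A)ᵀ * A := by
        rw [transpose_mul, diagonal_transpose]
    _ = (diagonal w * A')ᵀ * A := by rw [hA]
    _ = A'ᵀ * (diagonal w * A) := by rw [transpose_mul, diagonal_transpose, Matrix.mul_assoc]
    _ = A'ᵀ * diagonal w * A' := by rw [hA, Matrix.mul_assoc]

variable {w}

lemma centroid_euclAct (hw : ∑ i, w i ≠ 0) (R : Matrix (Fin 3) (Fin 3) ℝ) (τ : Fin 3 → ℝ)
    (V : Matrix (Fin n) (Fin 3) ℝ) :
    centroid w (euclAct R τ V) = R *ᵥ centroid w V + τ := by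
  have hsum : onesVec n ⬝ᵥ w = ∑ i, w i := by simp [onesVec, dotProduct]
  simp only [centroid, euclAct, transpose_add, transpose_mul, transpose_transpose,
    transpose_vecMulVec, add_mulVec, ← mulVec_mulVec, vecMulVec_mulVec, hsum, mulVec_smul,
    op_smul_eq_smul, smul_add, smul_smul, inv_mul_cancel₀ hw, one_smul]

lemma sub_vecMulVec_centroid_euclAct (hw : ∑ i, w i ≠ 0) (R : Matrix (Fin 3) (Fin 3) ℝ)
    (τ : Fin 3 → ℝ) (V : Matrix (Fin n) (Fin 3) ℝ) :
    euclAct R τ V - vecMulVec (onesVec n) (centroid w (euclAct R τ V)) =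
      (V - vecMulVec (onesVec n) (centroid w V)) * Rᵀ := by
  rw [centroid_euclAct hw, vecMulVec_add, vecMulVec_mulVec_eq_mul_transpose, Matrix.sub_mul,
    euclAct]
  abel

lemma wcov_euclAct (hw : ∑ i, w i ≠ 0) (R : Matrix (Fin 3) (Fin 3) ℝ) (τ : Fin 3 → ℝ)
    (V : Matrix (Fin n) (Fin 3) ℝ) :
    wcov w (euclAct R τ V) = R * wcov w V * Rᵀ := by
  simp only [wcov, sub_vecMulVec_centroid_euclAct hw, transpose_mul, transpose_transpose,
    Matrix.mul_assoc]

end Weighted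

def euclMul (g p : Matrix (Fin 3) (Fin 3) ℝ × (Fin 3 → ℝ)) :
    Matrix (Fin 3) (Fin 3) ℝ × (Fin 3 → ℝ) :=
  (g.1 * p.1, g.1 *ᵥ p.2 + g.2)

section Euclidean

variable {g : Matrix (Fin 3) (Fin 3) ℝ × (Fin 3 → ℝ)}

lemma mulVec_injective_of_mem_orthogonalGroup {ι α : Type*} [Fintype ι] [DecidableEq ι]
    [CommRing α] {R : Matrix ι ι α} (hR : R ∈ orthogonalGroup ι α) :
    Function.Injective (R *ᵥ ·) := fun u v h => by
  simpa [mulVec_mulVec, (mem_orthogonalGroup_iff' _ _).1 hR] using congrArg (Rᵀ *ᵥ ·) h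

lemma euclMul_bijective (hg : g.1 ∈ orthogonalGroup (Fin 3) ℝ) :
    Function.Bijective (euclMul g) := by
  have hRR := (mem_orthogonalGroup_iff _ _).1 hg
  have hRR' := (mem_orthogonalGroup_iff' _ _).1 hg
  refine Function.bijective_iff_has_inverse.2
    ⟨euclMul (g.1ᵀ, -(g.1ᵀ *ᵥ g.2)), fun p => ?_, fun p => ?_⟩
  · simp [euclMul, ← Matrix.mul_assoc, hRR', mulVec_add, mulVec_mulVec]
  · simp [euclMul, ← Matrix.mul_assoc, hRR, mulVec_add, mulVec_mulVec, mulVec_neg]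

lemma euclActInv_euclMul {n : ℕ} (hg : g.1 ∈ orthogonalGroup (Fin 3) ℝ)
    (p : Matrix (Fin 3) (Fin 3) ℝ × (Fin 3 → ℝ)) (Y : Matrix (Fin n) (Fin 3) ℝ) :
    euclActInv (euclMul g p).1 (euclMul g p).2 (euclAct g.1 g.2 Y) = euclActInv p.1 p.2 Y := by
  have h : euclAct g.1 g.2 Y - vecMulVec (onesVec n) (g.1 *ᵥ p.2 + g.2) =
      (Y - vecMulVec (onesVec n) p.2) * g.1ᵀ := by
    rw [euclAct, vecMulVec_add, vecMulVec_mulVec_eq_mul_transpose, Matrix.sub_mul]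
    abel
  rw [euclActInv, euclActInv, euclMul, h, Matrix.mul_assoc, ← Matrix.mul_assoc g.1ᵀ,
    (mem_orthogonalGroup_iff' _ _).1 hg, Matrix.one_mul]

lemma rhoZ_euclMul {m d : ℕ} (p : Matrix (Fin 3) (Fin 3) ℝ × (Fin 3 → ℝ))
    (Z : (Fin m → ℝ) × Matrix (Fin d) (Fin 3) ℝ) :
    rhoZ (euclMul g p).1 (euclMul g p).2 Z = rhoZ g.1 g.2 (rhoZ p.1 p.2 Z) := by
  refine Prod.ext rfl ?_
  simp only [rhoZ, euclAct, euclMul, transpose_mul, vecMulVec_add,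
    vecMulVec_mulVec_eq_mul_transpose, Matrix.add_mul, Matrix.mul_assoc]
  abel

end Euclidean

theorem Module.End.exists_eq_smul_of_mem_eigenspace {ι K V : Type*} [Fintype ι] [Field K]
    [AddCommGroup V] [Module K V] [FiniteDimensional K V] (f : Module.End K V) {μ : ι → K}
    (hμ : Function.Injective μ) {e : ι → V} (he : ∀ i, f.HasEigenvector (μ i) (e i))
    (hcard : Fintype.card ι = Module.finrank K V) {i : ι} {u : V}
    (hu : u ∈ f.eigenspace (μ i)) : ∃ c : K, u = c • e i := by
  classical
  let B := basisOfLinearIndependentOfCardEqFinrank' e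
    (f.eigenvectors_linearIndependent' μ hμ e he) hcard
  have hB : ⇑B = e := Basis.coe_mk _ _
  have hcoord : ∀ j, (B.coord j).comp f = μ j • B.coord j := fun j =>
    B.ext fun l => by
      rw [LinearMap.comp_apply, hB, (he l).apply_eq_smul, map_smul, LinearMap.smul_apply, ← hB]
      by_cases hl : l = j <;> simp [hl]
  have hvanish : ∀ j ≠ i, B.repr u j = 0 := by
    intro j hj
    have h := LinearMap.congr_fun (hcoord j) u
    simp only [LinearMap.comp_apply, Module.End.mem_eigenspace_iff.1 hu, map_smul,
      LinearMap.smul_apply, Basis.coord_apply, smul_eq_mul] at h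
    exact (mul_eq_mul_right_iff.1 h).resolve_left (hμ.ne hj.symm)
  refine ⟨B.repr u i, ?_⟩
  conv_lhs => rw [← B.sum_repr u]
  rw [Finset.sum_eq_single i (fun j _ hj => by rw [hvanish j hj, zero_smul]) (by simp), hB]

lemma eq_or_eq_neg_of_unit_eigenvector {ι : Type*} [Fintype ι] {C : Matrix ι ι ℝ}
    {μ : ι → ℝ} (hμ : Function.Injective μ) {e : ι → ι → ℝ} (he1 : ∀ i, e i ⬝ᵥ e i = 1)
    (he : ∀ i, C *ᵥ e i = μ i • e i) {i : ι} {u : ι → ℝ} (hu1 : u ⬝ᵥ u = 1)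
    (hu : C *ᵥ u = μ i • u) : u = e i ∨ u = -e i := by
  have hvec : ∀ i, Module.End.HasEigenvector (mulVecLin C) (μ i) (e i) := fun i =>
    ⟨Module.End.mem_eigenspace_iff.2 (he i), fun h => by simpa [h] using he1 i⟩
  obtain ⟨c, rfl⟩ := Module.End.exists_eq_smul_of_mem_eigenspace (mulVecLin C) hμ hvec
    (Module.finrank_fintype_fun_eq_card ℝ).symm (Module.End.mem_eigenspace_iff.2 hu)
  have hc : c * c = 1 := by simpa [he1 i] using hu1
  rcases mul_self_eq_one_iff.1 hc with rfl | rfl <;> simp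

lemma exists_unit_eigenvector {C : Matrix (Fin 3) (Fin 3) ℝ} {μ : ℝ} (h : IsEigenvalue C μ) :
    ∃ u : Fin 3 → ℝ, u ⬝ᵥ u = 1 ∧ C *ᵥ u = μ • u := by
  obtain ⟨v, hv0, hv⟩ := h
  have hpos : 0 < v ⬝ᵥ v := by simpa using dotProduct_self_star_pos_iff.2 hv0
  refine ⟨(√(v ⬝ᵥ v))⁻¹ • v, ?_, by rw [mulVec_smul, hv, smul_comm]⟩
  rw [smul_dotProduct, dotProduct_smul, smul_eq_mul, smul_eq_mul, ← mul_assoc,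
    ← mul_inv, Real.mul_self_sqrt hpos.le, inv_mul_cancel₀ hpos.ne']

section PCAFrame

variable {n : ℕ} {lam : Fin 3 → ℝ} {w : Fin n → ℝ}

lemma euclMul_mem_pcaFrame_euclAct_iff (hw : ∑ i, w i ≠ 0)
    {g : Matrix (Fin 3) (Fin 3) ℝ × (Fin 3 → ℝ)} (hg : g.1 ∈ orthogonalGroup (Fin 3) ℝ)
    {p : Matrix (Fin 3) (Fin 3) ℝ × (Fin 3 → ℝ)} (V : Matrix (Fin n) (Fin 3) ℝ) :
    euclMul g p ∈ pcaFrame lam w (euclAct g.1 g.2 V) ↔ p ∈ pcaFrame lam w V := by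
  have hRR' := (mem_orthogonalGroup_iff' _ _).1 hg
  have hinj := mulVec_injective_of_mem_orthogonalGroup hg
  have hnorm : ∀ v : Fin 3 → ℝ, g.1 *ᵥ v ⬝ᵥ g.1 *ᵥ v = v ⬝ᵥ v := fun v => by
    rw [dotProduct_mulVec, ← mulVec_transpose, mulVec_mulVec, hRR', one_mulVec]
  have heig : ∀ (μ : ℝ) (v : Fin 3 → ℝ),
      (g.1 * wcov w V * g.1ᵀ) *ᵥ (g.1 *ᵥ v) = μ • g.1 *ᵥ v ↔ wcov w V *ᵥ v = μ • v :=
    fun μ v => by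
      rw [← mulVec_smul, mulVec_mulVec, Matrix.mul_assoc, hRR', Matrix.mul_one,
        ← mulVec_mulVec, hinj.eq_iff]
  simp only [pcaFrame, Set.mem_ofPred_eq, euclMul, centroid_euclAct hw, wcov_euclAct hw,
    col_mul_eq_mulVec, hnorm, heig, add_left_inj, hinj.eq_iff]

lemma euclMul_image_pcaFrame (hw : ∑ i, w i ≠ 0)
    {g : Matrix (Fin 3) (Fin 3) ℝ × (Fin 3 → ℝ)} (hg : g.1 ∈ orthogonalGroup (Fin 3) ℝ)
    (V : Matrix (Fin n) (Fin 3) ℝ) :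
    euclMul g '' pcaFrame lam w V = pcaFrame lam w (euclAct g.1 g.2 V) := by
  ext q
  obtain ⟨p, rfl⟩ := (euclMul_bijective hg).2 q
  rw [(euclMul_bijective hg).1.mem_set_image, euclMul_mem_pcaFrame_euclAct_iff hw hg]

lemma pcaFrame_congr {V V' : Matrix (Fin n) (Fin 3) ℝ} (h : rowScale w V = rowScale w V') :
    pcaFrame lam w V = pcaFrame lam w V' := by
  rw [pcaFrame, pcaFrame, centroid_congr w h, wcov_congr w h]

lemma pcaFrame_nonempty {V : Matrix (Fin n) (Fin 3) ℝ}
    (heig : ∀ i, IsEigenvalue (wcov w V) (lam i)) :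
    (pcaFrame lam w V).Nonempty := by
  choose e he1 he using fun i => exists_unit_eigenvector (heig i)
  exact ⟨(of fun a i => e i a, centroid w V), rfl, fun i => ⟨he1 i, he i⟩⟩

lemma pcaFrame_finite {V : Matrix (Fin n) (Fin 3) ℝ} (hlam : Function.Injective lam)
    (heig : ∀ i, IsEigenvalue (wcov w V) (lam i)) : (pcaFrame lam w V).Finite := by
  choose e he1 he using fun i => exists_unit_eigenvector (heig i)
  refine ((Set.Finite.pi' fun i => Set.toFinite {e i, -e i}).image
    fun cols => (of fun a i => cols i a, centroid w V)).subset ?_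
  rintro ⟨P, t⟩ ⟨rfl, hP⟩
  refine ⟨fun i a => P a i, fun i => ?_, rfl⟩
  exact eq_or_eq_neg_of_unit_eigenvector hlam he1 he (hP i).1 (hP i).2

end PCAFrame

lemma inv_card_smul_sum_rhoZ {α : Type*} {m d : ℕ} {s : Finset α} (hs : s.Nonempty)
    (R : Matrix (Fin 3) (Fin 3) ℝ) (τ : Fin 3 → ℝ)
    (A : α → (Fin m → ℝ) × Matrix (Fin d) (Fin 3) ℝ) :
    (s.card : ℝ)⁻¹ • ∑ p ∈ s, rhoZ R τ (A p) = rhoZ R τ ((s.card : ℝ)⁻¹ • ∑ p ∈ s, A p) := by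
  have hcard : (s.card : ℝ) ≠ 0 := Nat.cast_ne_zero.2 hs.card_pos.ne'
  refine Prod.ext (by simp [rhoZ, Prod.fst_sum]) ?_
  simp only [rhoZ, euclAct, Prod.smul_snd, Prod.snd_sum, Finset.sum_add_distrib,
    ← Matrix.sum_mul, Finset.sum_const, smul_add, Matrix.smul_mul, ← Nat.cast_smul_eq_nsmul ℝ,
    smul_smul, inv_mul_cancel₀ hcard, one_smul]

lemma inv_card_smul_finsum_mem_rhoZ {α : Type*} {m d : ℕ} {S : Set α} (hS : S.Finite)
    (hne : S.Nonempty) (R : Matrix (Fin 3) (Fin 3) ℝ) (τ : Fin 3 → ℝ)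
    (A : α → (Fin m → ℝ) × Matrix (Fin d) (Fin 3) ℝ) :
    (Nat.card S : ℝ)⁻¹ • ∑ᶠ p ∈ S, rhoZ R τ (A p) =
      rhoZ R τ ((Nat.card S : ℝ)⁻¹ • ∑ᶠ p ∈ S, A p) := by
  rw [Nat.card_eq_card_finite_toFinset hS, finsum_mem_eq_finite_toFinset_sum _ hS,
    finsum_mem_eq_finite_toFinset_sum _ hS,
    inv_card_smul_sum_rhoZ (hS.toFinset_nonempty.2 hne)]

section Encoder

variable {n k : ℕ} {W : Matrix (Fin n) (Fin k) ℝ} {j : Fin k}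

lemma partGeom_congr {X X' : Matrix (Fin n) (Fin 3) ℝ}
    (h : rowScale (fun i => W i j) X = rowScale (fun i => W i j) X') :
    partGeom W j X = partGeom W j X' := by
  rw [partGeom, partGeom, centroid_congr _ h, h]

lemma partGeom_euclAct (hw : ∑ i, W i j ≠ 0) (R : Matrix (Fin 3) (Fin 3) ℝ) (τ : Fin 3 → ℝ)
    (X : Matrix (Fin n) (Fin 3) ℝ) :
    partGeom W j (euclAct R τ X) = euclAct R τ (partGeom W j X) := by
  have hones : (fun i => 1 - W i j) + (fun i => W i j) = onesVec n := by
    ext i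
    simp [onesVec]
  rw [partGeom, partGeom, centroid_euclAct hw, vecMulVec_add, vecMulVec_mulVec_eq_mul_transpose,
    rowScale_eq_diagonal_mul, rowScale_eq_diagonal_mul, euclAct, euclAct, Matrix.mul_add,
    mul_vecMulVec, diagonal_mulVec_onesVec, ← hones, add_vecMulVec, Matrix.add_mul,
    Matrix.mul_assoc]
  abel

lemma encCode_congr {m d : ℕ} (lam : Fin k → Fin 3 → ℝ)
    (φ : Matrix (Fin n) (Fin 3) ℝ → (Fin m → ℝ) × Matrix (Fin d) (Fin 3) ℝ)
    {X X' : Matrix (Fin n) (Fin 3) ℝ}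
    (h : rowScale (fun i => W i j) X = rowScale (fun i => W i j) X') :
    encCode W lam φ X j = encCode W lam φ X' j := by
  rw [encCode, encCode, pcaFrame_congr h, partGeom_congr h]

lemma encCode_euclAct {m d : ℕ} {lam : Fin k → Fin 3 → ℝ}
    (φ : Matrix (Fin n) (Fin 3) ℝ → (Fin m → ℝ) × Matrix (Fin d) (Fin 3) ℝ)
    {X : Matrix (Fin n) (Fin 3) ℝ} (hw : ∑ i, W i j ≠ 0) (hlam : Function.Injective (lam j))
    (heig : ∀ i, IsEigenvalue (wcov (fun i' => W i' j) X) (lam j i))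
    {g : Matrix (Fin 3) (Fin 3) ℝ × (Fin 3 → ℝ)} (hg : g.1 ∈ orthogonalGroup (Fin 3) ℝ) :
    encCode W lam φ (euclAct g.1 g.2 X) j = rhoZ g.1 g.2 (encCode W lam φ X j) := by
  have hinj := (euclMul_bijective hg).1
  rw [encCode, ← euclMul_image_pcaFrame hw hg, Nat.card_image_of_injective hinj,
    finsum_mem_image hinj.injOn, partGeom_euclAct hw]
  simp only [euclActInv_euclMul hg, rhoZ_euclMul]
  exact inv_card_smul_finsum_mem_rhoZ (pcaFrame_finite hlam heig) (pcaFrame_nonempty heig) _ _ _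

end Encoder

lemma mul_eq_ite_of_sum_eq_one {ι : Type*} [Fintype ι] [DecidableEq ι] {a : ι → ℝ}
    (h01 : ∀ j, a j = 0 ∨ a j = 1) (hsum : ∑ j, a j = 1) (j l : ι) :
    a j * a l = if l = j then a j else 0 := by
  split_ifs with hlj
  · subst hlj
    rcases h01 l with h | h <;> simp [h]
  · have hnonneg : ∀ i, 0 ≤ a i := fun i => (h01 i).elim (·.ge) (· ▸ zero_le_one)
    have hle : a j + a l ≤ 1 := hsum ▸ (Finset.sum_pair (Ne.symm hlj)).symm.le.trans
      (Finset.sum_le_sum_of_subset_of_nonneg (Finset.subset_univ _) fun i _ _ => hnonneg i)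
    rcases h01 j with h | h
    · rw [h, zero_mul]
    · rw [h, one_mul]
      linarith [hnonneg l]

lemma rowScale_sum_of_partition {n k : ℕ} {W : Matrix (Fin n) (Fin k) ℝ}
    (hW01 : ∀ i j, W i j = 0 ∨ W i j = 1) (hWrow : ∀ i, ∑ j, W i j = 1)
    (Y : Fin k → Matrix (Fin n) (Fin 3) ℝ) (j : Fin k) :
    rowScale (fun i => W i j) (∑ l, rowScale (fun i => W i l) (Y l)) =
      rowScale (fun i => W i j) (Y j) := by
  ext i c
  simp [rowScale, Matrix.sum_apply, Finset.mul_sum, ← mul_assoc,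
    mul_eq_ite_of_sum_eq_one (hW01 i) (hWrow i)]

/-- **Theorem 1, encoder part** (part-equivariance of the frame-averaged encoder):
for hard weights `W ∈ {0,1}^{n×k}` with rows summing to `1` and an arbitrary backbone
`φ`, transforming the `j`-th part of the input by `g_j ∈ E(3)` transforms the `j`-th
latent code by `ρ_Z(g_j)`. -/
theorem encoder_part_equivariant {n k m d : ℕ}
    (W : Matrix (Fin n) (Fin k) ℝ)
    (hW01 : ∀ i j, W i j = 0 ∨ W i j = 1)
    (hWrow : ∀ i, ∑ j, W i j = 1)
    (hWcol : ∀ j, 0 < ∑ i, W i j)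
    (φ : Matrix (Fin n) (Fin 3) ℝ → (Fin m → ℝ) × Matrix (Fin d) (Fin 3) ℝ)
    (X : Matrix (Fin n) (Fin 3) ℝ)
    (lam : Fin k → Fin 3 → ℝ)
    (hmono : ∀ j, StrictMono (lam j))
    (heig : ∀ j i, IsEigenvalue (wcov (fun i' => W i' j) X) (lam j i))
    (g : Fin k → Matrix (Fin 3) (Fin 3) ℝ × (Fin 3 → ℝ))
    (hg : ∀ l, (g l).1 * (g l).1ᵀ = 1) :
    ∀ j : Fin k,
      encCode W lam φ (∑ l, rowScale (fun i => W i l) (euclAct (g l).1 (g l).2 X)) j =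
        rhoZ (g j).1 (g j).2 (encCode W lam φ X j) := by
  intro j
  rw [encCode_congr lam φ (rowScale_sum_of_partition hW01 hWrow _ j)]
  exact encCode_euclAct φ (hWcol j).ne' (hmono j).injective (heig j)
    ((mem_orthogonalGroup_iff _ _).2 (hg j))

end
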